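/- (One-step descent bound, noisy/corrupted-gradient case.) Let U* and U be real n×r matrices with orthonormal columns, P := I − U*(U*)ᵀ, δ := ‖P U‖. Let B and B* be real r×q matrices, let grad_cln and Err be real n×r matrices, set grad := grad_cln − Err, X* := U* B*, and E := (U B − X*) Bᵀ. Assume η ≥ 0, η‖B‖² ≤ 0.9, and 1 − η‖E‖ − η‖E − grad_cln‖ − η‖Err‖ > 0. Then 1 − η‖grad‖ > 0 and ‖P(U − η·grad)‖ / (1 − η‖grad‖) ≤ [ δ·(1 − η·λ_min(B Bᵀ)) + η‖E − grad_cln‖ + η‖Err‖ ] / [ 1 − η‖E‖ − η‖E − grad_cln‖ − η‖Err‖ ]. -/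

import Mathlib

/-!
Since `P X⋆ = 0` we have `P E = (P U) B Bᵀ`, hence
`P (U - η grad) = (P U) (I - η B Bᵀ) + η P (E - grad_cln) + η P Err`.
`P` is an orthogonal projection, so `‖P‖ ≤ 1`. For a symmetric `M` with `η ‖M‖ ≤ 1` the Rayleigh
quotients of `I - η M` lie in `[0, 1 - η λ_min(M)]`, and the spectral norm of a symmetric matrix
is its largest absolute Rayleigh quotient; apply this to `M = B Bᵀ`, where `‖B Bᵀ‖ = ‖B‖²`.
The denominator comes from `‖grad‖ ≤ ‖E‖ + ‖E - grad_cln‖ + ‖Err‖`.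
-/

open Matrix
open scoped RealInnerProductSpace

/-- Spectral norm (operator norm induced by the Euclidean norm) of a real matrix. -/
noncomputable def specNorm {m n : ℕ} (M : Matrix (Fin m) (Fin n) ℝ) : ℝ :=
  ‖LinearMap.toContinuousLinearMap (Matrix.toEuclideanLin M)‖

/-- Smallest eigenvalue of a (symmetric) square matrix, via the Rayleigh quotient:
minimum of `⟪x, M x⟫` over unit vectors `x`. -/
noncomputable def lambdaMin {n : ℕ} (M : Matrix (Fin n) (Fin n) ℝ) : ℝ :=
  ⨅ x : Metric.sphere (0 : EuclideanSpace ℝ (Fin n)) 1,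
    ⟪(x : EuclideanSpace ℝ (Fin n)),
      Matrix.toEuclideanLin M (x : EuclideanSpace ℝ (Fin n))⟫

open scoped Matrix.Norms.L2Operator

lemma specNorm_eq_l2_opNorm {m n : ℕ} (M : Matrix (Fin m) (Fin n) ℝ) : specNorm M = ‖M‖ := rfl

namespace Matrix

lemma norm_toEuclideanLin_apply_le {m n : ℕ} (M : Matrix (Fin m) (Fin n) ℝ)
    (x : EuclideanSpace ℝ (Fin n)) : ‖toEuclideanLin M x‖ ≤ ‖M‖ * ‖x‖ :=
  (LinearMap.toContinuousLinearMap (toEuclideanLin M)).le_opNorm x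

variable {n : ℕ}

lemma abs_inner_toEuclideanLin_self_le (M : Matrix (Fin n) (Fin n) ℝ)
    (x : EuclideanSpace ℝ (Fin n)) : |⟪x, toEuclideanLin M x⟫| ≤ ‖M‖ * ‖x‖ ^ 2 :=
  calc |⟪x, toEuclideanLin M x⟫| ≤ ‖x‖ * ‖toEuclideanLin M x‖ := abs_real_inner_le_norm _ _
    _ ≤ ‖x‖ * (‖M‖ * ‖x‖) := by gcongr; exact norm_toEuclideanLin_apply_le M x
    _ = ‖M‖ * ‖x‖ ^ 2 := by ring

lemma l2_opNorm_le_of_abs_inner_le {M : Matrix (Fin n) (Fin n) ℝ} (hM : M.IsHermitian)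
    {s : ℝ} (hs : 0 ≤ s) (h : ∀ x, |⟪x, toEuclideanLin M x⟫| ≤ s * ‖x‖ ^ 2) : ‖M‖ ≤ s := by
  rw [cstar_norm_def, ContinuousLinearMap.norm_eq_iSup_rayleighQuotient _
    (isSymmetric_toEuclideanLin_iff.mpr hM)]
  refine ciSup_le fun x => ?_
  rw [ContinuousLinearMap.rayleighQuotient, ContinuousLinearMap.reApplyInnerSelf_apply,
    RCLike.re_to_real, real_inner_comm, abs_div, abs_sq]
  exact div_le_of_le_mul₀ (sq_nonneg _) hs (h x)

lemma bddBelow_inner_toEuclideanLin_sphere (M : Matrix (Fin n) (Fin n) ℝ) :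
    BddBelow (Set.range fun x : Metric.sphere (0 : EuclideanSpace ℝ (Fin n)) 1 =>
      ⟪(x : EuclideanSpace ℝ (Fin n)), toEuclideanLin M x⟫) := by
  refine ⟨-‖M‖, ?_⟩
  rintro _ ⟨x, rfl⟩
  have hx := abs_inner_toEuclideanLin_self_le M x
  rw [norm_eq_of_mem_sphere, one_pow, mul_one] at hx
  exact neg_le_of_abs_le hx

lemma lambdaMin_mul_norm_sq_le_inner (M : Matrix (Fin n) (Fin n) ℝ)
    (x : EuclideanSpace ℝ (Fin n)) : lambdaMin M * ‖x‖ ^ 2 ≤ ⟪x, toEuclideanLin M x⟫ := by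
  rcases eq_or_ne x 0 with rfl | hx
  · simp
  have hx₀ : 0 < ‖x‖ := norm_pos_iff.mpr hx
  have hunit : ‖x‖⁻¹ • x ∈ Metric.sphere (0 : EuclideanSpace ℝ (Fin n)) 1 := by
    simp [norm_smul, hx₀.ne']
  have hle := ciInf_le (bddBelow_inner_toEuclideanLin_sphere M) ⟨_, hunit⟩
  simp only [_root_.map_smul, real_inner_smul_left, real_inner_smul_right] at hle
  calc lambdaMin M * ‖x‖ ^ 2 ≤ ‖x‖⁻¹ * (‖x‖⁻¹ * ⟪x, toEuclideanLin M x⟫) * ‖x‖ ^ 2 := by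
        gcongr; exact hle
    _ = ⟪x, toEuclideanLin M x⟫ := by field_simp

lemma lambdaMin_le_l2_opNorm (M : Matrix (Fin n) (Fin n) ℝ) : lambdaMin M ≤ ‖M‖ := by
  rcases isEmpty_or_nonempty (Metric.sphere (0 : EuclideanSpace ℝ (Fin n)) 1) with h | ⟨⟨x⟩⟩
  · -- `n = 0`: the infimum over the empty sphere is the junk value `0`.
    rw [lambdaMin, Real.iInf_of_isEmpty]
    exact norm_nonneg M
  · calc lambdaMin M ≤ ⟪(x : EuclideanSpace ℝ (Fin n)), toEuclideanLin M x⟫ :=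
          ciInf_le (bddBelow_inner_toEuclideanLin_sphere M) x
      _ ≤ ‖M‖ * ‖(x : EuclideanSpace ℝ (Fin n))‖ ^ 2 :=
          le_of_abs_le (abs_inner_toEuclideanLin_self_le M x)
      _ = ‖M‖ := by rw [norm_eq_of_mem_sphere, one_pow, mul_one]

lemma l2_opNorm_one_sub_smul_le {M : Matrix (Fin n) (Fin n) ℝ} (hM : M.IsHermitian) {η : ℝ}
    (hη₀ : 0 ≤ η) (hη : η * ‖M‖ ≤ 1) : ‖1 - η • M‖ ≤ 1 - η * lambdaMin M := by
  have hmin : η * lambdaMin M ≤ η * ‖M‖ := mul_le_mul_of_nonneg_left (lambdaMin_le_l2_opNorm M) hη₀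
  refine l2_opNorm_le_of_abs_inner_le (isHermitian_one.sub (hM.smul (IsSelfAdjoint.all η)))
    (by linarith) fun x => ?_
  have hquad : ⟪x, toEuclideanLin (1 - η • M) x⟫ = ‖x‖ ^ 2 - η * ⟪x, toEuclideanLin M x⟫ := by
    simp [inner_sub_right, real_inner_smul_right]
  have hlo := lambdaMin_mul_norm_sq_le_inner M x
  have hhi := le_of_abs_le (abs_inner_toEuclideanLin_self_le M x)
  rw [hquad, abs_le]
  constructor <;> nlinarith [sq_nonneg ‖x‖]

lemma isHermitian_mul_transpose_self {r : ℕ} (V : Matrix (Fin n) (Fin r) ℝ) :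
    (V * Vᵀ).IsHermitian := by
  simpa only [conjTranspose_eq_transpose_of_trivial] using isHermitian_mul_conjTranspose_self V

lemma isStarProjection_one_sub_mul_transpose {r : ℕ} {V : Matrix (Fin n) (Fin r) ℝ}
    (hV : Vᵀ * V = 1) : IsStarProjection (1 - V * Vᵀ) :=
  IsStarProjection.one_sub
    ⟨by rw [IsIdempotentElem, Matrix.mul_assoc, ← Matrix.mul_assoc Vᵀ, hV, Matrix.one_mul],
      (isHermitian_mul_transpose_self V).isSelfAdjoint⟩

lemma one_sub_mul_transpose_mul_self {r : ℕ} {V : Matrix (Fin n) (Fin r) ℝ}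
    (hV : Vᵀ * V = 1) : (1 - V * Vᵀ) * V = 0 := by
  rw [Matrix.sub_mul, Matrix.one_mul, Matrix.mul_assoc, hV, Matrix.mul_one, sub_self]

lemma l2_opNorm_mul_transpose_self {m : ℕ} (B : Matrix (Fin n) (Fin m) ℝ) :
    ‖B * Bᵀ‖ = ‖B‖ ^ 2 := by
  have h := l2_opNorm_conjTranspose_mul_self Bᴴ
  rw [conjTranspose_conjTranspose, l2_opNorm_conjTranspose, conjTranspose_eq_transpose_of_trivial]
    at h
  rw [h, sq]

end Matrix

section Descent

variable {n r q : ℕ} (P : Matrix (Fin n) (Fin n) ℝ) (U : Matrix (Fin n) (Fin r) ℝ)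
  (B : Matrix (Fin r) (Fin q) ℝ) (X : Matrix (Fin n) (Fin q) ℝ) (G Err : Matrix (Fin n) (Fin r) ℝ)
  (η : ℝ)

lemma mul_sub_smul_sub_eq_of_mul_eq_zero (hPX : P * X = 0) :
    P * (U - η • (G - Err)) =
      P * U * (1 - η • (B * Bᵀ)) + η • (P * ((U * B - X) * Bᵀ - G)) + η • (P * Err) := by
  simp only [Matrix.mul_sub, Matrix.sub_mul, Matrix.mul_smul, Matrix.mul_one, ← Matrix.mul_assoc,
    hPX, Matrix.zero_mul, smul_sub, sub_zero]
  abel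

lemma l2_opNorm_mul_sub_smul_sub_le_of_mul_eq_zero (hP : ‖P‖ ≤ 1) (hPX : P * X = 0) (hη : 0 ≤ η) :
    ‖P * (U - η • (G - Err))‖ ≤
      ‖P * U‖ * ‖1 - η • (B * Bᵀ)‖ + η * ‖(U * B - X) * Bᵀ - G‖ + η * ‖Err‖ := by
  have hcontract (M : Matrix (Fin n) (Fin r) ℝ) : ‖η • (P * M)‖ ≤ η * ‖M‖ := by
    rw [norm_smul, Real.norm_of_nonneg hη]
    gcongr
    exact (l2_opNorm_mul P M).trans (mul_le_of_le_one_left (norm_nonneg M) hP)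
  rw [mul_sub_smul_sub_eq_of_mul_eq_zero P U B X G Err η hPX]
  refine norm_add₃_le.trans ?_
  gcongr
  · exact l2_opNorm_mul _ _
  · exact hcontract _
  · exact hcontract _

end Descent

theorem altGDmin_one_step_descent_noisy_general (n r q : ℕ)
    (Ustar U : Matrix (Fin n) (Fin r) ℝ)
    (hUs : Ustarᵀ * Ustar = 1)
    (B Bstar : Matrix (Fin r) (Fin q) ℝ)
    (grad_cln Err : Matrix (Fin n) (Fin r) ℝ) (η : ℝ)
    (P : Matrix (Fin n) (Fin n) ℝ)
    (hP : P = (1 : Matrix (Fin n) (Fin n) ℝ) - Ustar * Ustarᵀ)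
    (δ : ℝ) (hδdef : δ = specNorm (P * U))
    (grad : Matrix (Fin n) (Fin r) ℝ) (hgrad : grad = grad_cln - Err)
    (Xstar : Matrix (Fin n) (Fin q) ℝ) (hX : Xstar = Ustar * Bstar)
    (E : Matrix (Fin n) (Fin r) ℝ) (hE : E = (U * B - Xstar) * Bᵀ)
    (hη0 : 0 ≤ η) (hηB : η * specNorm B ^ 2 ≤ 0.9)
    (hden : 0 < 1 - η * specNorm E - η * specNorm (E - grad_cln) - η * specNorm Err) :
    0 < 1 - η * specNorm grad ∧
    specNorm (P * (U - η • grad)) / (1 - η * specNorm grad) ≤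
      (δ * (1 - η * lambdaMin (B * Bᵀ)) + η * specNorm (E - grad_cln) + η * specNorm Err) /
        (1 - η * specNorm E - η * specNorm (E - grad_cln) - η * specNorm Err) := by
  simp only [specNorm_eq_l2_opNorm] at *
  subst hδdef hgrad
  have hPX : P * Xstar = 0 := by
    rw [hP, hX, ← Matrix.mul_assoc, one_sub_mul_transpose_mul_self hUs, Matrix.zero_mul]
  have hBBt : ‖1 - η • (B * Bᵀ)‖ ≤ 1 - η * lambdaMin (B * Bᵀ) :=
    l2_opNorm_one_sub_smul_le (isHermitian_mul_transpose_self B) hη0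
      (by rw [l2_opNorm_mul_transpose_self]; linarith)
  have hnum := l2_opNorm_mul_sub_smul_sub_le_of_mul_eq_zero P U B Xstar grad_cln Err η
    (hP ▸ (isStarProjection_one_sub_mul_transpose hUs).norm_le) hPX hη0
  have hgrad_le : ‖grad_cln - Err‖ ≤ ‖E‖ + ‖E - grad_cln‖ + ‖Err‖ :=
    (norm_sub_le _ _).trans (by gcongr; exact norm_le_insert E grad_cln)
  have hden_le : 1 - η * ‖E‖ - η * ‖E - grad_cln‖ - η * ‖Err‖ ≤ 1 - η * ‖grad_cln - Err‖ := by
    linarith [mul_le_mul_of_nonneg_left hgrad_le hη0]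
  have hcontraction : 0 ≤ 1 - η * lambdaMin (B * Bᵀ) := (norm_nonneg _).trans hBBt
  refine ⟨hden.trans_le hden_le, div_le_div₀ (by positivity) ?_ hden hden_le⟩
  rw [← hE] at hnum
  exact hnum.trans (by gcongr)

/-- one-step descent bound, noisy/corrupted-gradient case. -/
theorem altGDmin_one_step_descent_noisy (n r q : ℕ)
    (Ustar U : Matrix (Fin n) (Fin r) ℝ)
    (hU : Uᵀ * U = 1) (hUs : Ustarᵀ * Ustar = 1)
    (B Bstar : Matrix (Fin r) (Fin q) ℝ)
    (grad_cln Err : Matrix (Fin n) (Fin r) ℝ) (η : ℝ)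
    (P : Matrix (Fin n) (Fin n) ℝ)
    (hP : P = (1 : Matrix (Fin n) (Fin n) ℝ) - Ustar * Ustarᵀ)
    (δ : ℝ) (hδdef : δ = specNorm (P * U))
    (grad : Matrix (Fin n) (Fin r) ℝ) (hgrad : grad = grad_cln - Err)
    (Xstar : Matrix (Fin n) (Fin q) ℝ) (hX : Xstar = Ustar * Bstar)
    (E : Matrix (Fin n) (Fin r) ℝ) (hE : E = (U * B - Xstar) * Bᵀ)
    (hη0 : 0 ≤ η) (hηB : η * specNorm B ^ 2 ≤ 0.9)
    (hden : 0 < 1 - η * specNorm E - η * specNorm (E - grad_cln) - η * specNorm Err) :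
    0 < 1 - η * specNorm grad ∧
    specNorm (P * (U - η • grad)) / (1 - η * specNorm grad) ≤
      (δ * (1 - η * lambdaMin (B * Bᵀ)) + η * specNorm (E - grad_cln) + η * specNorm Err) /
        (1 - η * specNorm E - η * specNorm (E - grad_cln) - η * specNorm Err) :=
  altGDmin_one_step_descent_noisy_general n r q Ustar U hUs B Bstar grad_cln Err η P hP δ hδdef grad
    hgrad Xstar hX E hE hη0 hηB hden
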